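/- arXiv:2007.03273 — 5 statements merged into one kernel-verified Lean document; each statement's English description precedes it below -/
import Mathlib

section
/- For fixed constants t > 0, τ > 0, ν ≥ 2 with t - ντ > 0, α > 0, μ > 0, the function f(ℓ) = ℓ·(1 - exp(-(αμ/ℓ)(t - ℓ/μ - τν))) is strictly concave on ℓ > 0; specifically, its second derivative equals -exp(-(αμ/ℓ)(t - ντ - ℓ/μ)) · α²μ²(t - ντ)² / ℓ³ < 0. -/
/-! With `c = αμ(t - ντ)` the exponent is `α - c/ℓ`, so `f ℓ = ℓ (1 - exp (α - c/ℓ))`. Differentiating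
twice, the terms in `exp (α - c/ℓ) / ℓ²` cancel and only `-exp (α - c/ℓ) c² / ℓ³` survives, which is
negative for `ℓ > 0` as soon as `c ≠ 0`. -/

open Real Set

namespace ExpReturn

variable {c x : ℝ}

theorem hasDerivAt_sub_div (a c : ℝ) (hx : x ≠ 0) :
    HasDerivAt (fun y : ℝ => a - c / y) (c / x ^ 2) x := by
  simpa only [div_eq_mul_inv, mul_neg, sub_neg_eq_add, neg_div, sub_eq_add_neg, neg_neg, inv_pow]
    using ((hasDerivAt_inv hx).const_mul c).const_sub a

theorem hasDerivAt_mul_one_sub_exp (a c : ℝ) (hx : x ≠ 0) :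
    HasDerivAt (fun y : ℝ => y * (1 - exp (a - c / y)))
      (1 - exp (a - c / x) * (1 + c / x)) x := by
  refine ((hasDerivAt_id x).mul ((hasDerivAt_sub_div a c hx).exp.const_sub 1)).congr_deriv ?_
  rw [id]
  generalize exp (a - c / x) = E
  field_simp
  ring

theorem hasDerivAt_one_sub_exp_mul (a c : ℝ) (hx : x ≠ 0) :
    HasDerivAt (fun y : ℝ => 1 - exp (a - c / y) * (1 + c / y))
      (-exp (a - c / x) * c ^ 2 / x ^ 3) x := by
  have hinv : HasDerivAt (fun y : ℝ => 1 + c / y) (-(c / x ^ 2)) x := by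
    simpa only [div_eq_mul_inv, mul_neg, inv_pow] using ((hasDerivAt_inv hx).const_mul c).const_add 1
  refine (((hasDerivAt_sub_div a c hx).exp.mul hinv).const_sub 1).congr_deriv ?_
  field_simp
  ring

theorem deriv_deriv_mul_one_sub_exp (a c : ℝ) (hx : x ≠ 0) :
    deriv (deriv fun y : ℝ => y * (1 - exp (a - c / y))) x = -exp (a - c / x) * c ^ 2 / x ^ 3 := by
  have hderiv : deriv (fun y : ℝ => y * (1 - exp (a - c / y))) =ᶠ[nhds x]
      fun y => 1 - exp (a - c / y) * (1 + c / y) := by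
    filter_upwards [isOpen_compl_singleton.mem_nhds hx] with y hy
    exact (hasDerivAt_mul_one_sub_exp a c hy).deriv
  rw [hderiv.deriv_eq]
  exact (hasDerivAt_one_sub_exp_mul a c hx).deriv

theorem deriv_deriv_mul_one_sub_exp_neg (a : ℝ) (hc : c ≠ 0) (hx : 0 < x) :
    deriv (deriv fun y : ℝ => y * (1 - exp (a - c / y))) x < 0 := by
  rw [deriv_deriv_mul_one_sub_exp a c hx.ne', neg_mul, neg_div, neg_neg_iff_pos]
  positivity

theorem strictConcaveOn_mul_one_sub_exp (a : ℝ) (hc : c ≠ 0) :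
    StrictConcaveOn ℝ (Ioi 0) fun y : ℝ => y * (1 - exp (a - c / y)) := by
  refine strictConcaveOn_of_deriv2_neg' (convex_Ioi 0) ?_ fun y hy => ?_
  · exact fun y hy => (hasDerivAt_mul_one_sub_exp a c (ne_of_gt hy)).continuousAt.continuousWithinAt
  · simpa only [Function.iterate_succ, Function.iterate_zero, Function.comp_def, id_eq]
      using deriv_deriv_mul_one_sub_exp_neg a hc hy

theorem neg_div_mul_sub_div_sub {α μ t s ℓ : ℝ} (hμ : μ ≠ 0) (hℓ : ℓ ≠ 0) :
    -(α * μ / ℓ) * (t - ℓ / μ - s) = α - α * μ * (t - s) / ℓ := by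
  field_simp
  ring

end ExpReturn

open ExpReturn in
theorem stmt_3_general (t τ α μ : ℝ) (ν : ℕ)
    (hα : 0 < α) (hμ : 0 < μ) (hs : 0 < t - ν * τ) :
    StrictConcaveOn ℝ (Set.Ioi (0 : ℝ))
      (fun ℓ : ℝ => ℓ * (1 - Real.exp (-(α * μ / ℓ) * (t - ℓ / μ - τ * ν)))) ∧
    ∀ ℓ : ℝ, 0 < ℓ →
      deriv (deriv (fun ℓ : ℝ => ℓ * (1 - Real.exp (-(α * μ / ℓ) * (t - ℓ / μ - τ * ν))))) ℓ =
          -Real.exp (-(α * μ / ℓ) * (t - ν * τ - ℓ / μ)) *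
            (α ^ 2 * μ ^ 2 * (t - ν * τ) ^ 2) / ℓ ^ 3 ∧
      deriv (deriv (fun ℓ : ℝ => ℓ * (1 - Real.exp (-(α * μ / ℓ) * (t - ℓ / μ - τ * ν))))) ℓ
        < 0 := by
  set c := α * μ * (t - ν * τ)
  have hc : c ≠ 0 := by positivity
  have hf : (fun ℓ : ℝ => ℓ * (1 - exp (-(α * μ / ℓ) * (t - ℓ / μ - τ * ν)))) =
      fun ℓ => ℓ * (1 - exp (α - c / ℓ)) := by
    funext ℓ
    rcases eq_or_ne ℓ 0 with rfl | hℓ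
    · simp
    · rw [neg_div_mul_sub_div_sub hμ.ne' hℓ, mul_comm τ]
  refine hf ▸ ⟨strictConcaveOn_mul_one_sub_exp α hc, fun ℓ hℓ =>
    ⟨?_, deriv_deriv_mul_one_sub_exp_neg α hc hℓ⟩⟩
  rw [deriv_deriv_mul_one_sub_exp α c hℓ.ne', sub_right_comm,
    neg_div_mul_sub_div_sub hμ.ne' hℓ.ne']
  ring

/-- The expected-return function f(ℓ) = ℓ(1 - exp(-(αμ/ℓ)(t - ℓ/μ - τν))) is strictly concave
on ℓ > 0, with second derivative -exp(-(αμ/ℓ)(t - ντ - ℓ/μ))·α²μ²(t - ντ)²/ℓ³ < 0. -/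
theorem stmt_3 (t τ α μ : ℝ) (ν : ℕ) (ht : 0 < t) (hτ : 0 < τ) (hν : 2 ≤ ν)
    (hα : 0 < α) (hμ : 0 < μ) (hs : 0 < t - ν * τ) :
    StrictConcaveOn ℝ (Set.Ioi (0 : ℝ))
      (fun ℓ : ℝ => ℓ * (1 - Real.exp (-(α * μ / ℓ) * (t - ℓ / μ - τ * ν)))) ∧
    ∀ ℓ : ℝ, 0 < ℓ →
      deriv (deriv (fun ℓ : ℝ => ℓ * (1 - Real.exp (-(α * μ / ℓ) * (t - ℓ / μ - τ * ν))))) ℓ =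
          -Real.exp (-(α * μ / ℓ) * (t - ν * τ - ℓ / μ)) *
            (α ^ 2 * μ ^ 2 * (t - ν * τ) ^ 2) / ℓ ^ 3 ∧
      deriv (deriv (fun ℓ : ℝ => ℓ * (1 - Real.exp (-(α * μ / ℓ) * (t - ℓ / μ - τ * ν))))) ℓ
        < 0 :=
  stmt_3_general t τ α μ ν hα hμ hs
end

section
/- For fixed t > 0, τ > 0, α, μ > 0 and integer ν ≥ 2 with t - ντ > 0, the unique critical point of f(ℓ) = ℓ·(1 - exp(-(αμ/ℓ)(t - ℓ/μ - τν))) on (0, ∞) is ℓ* = -αμ(t - ντ)/(W₋₁(-e^{-(1+α)}) + 1), where W₋₁ is the lower real branch of the Lambert W function; i.e., f'(ℓ*) = 0. -/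
/-! Substituting `x = αμ(t - ντ)/ℓ` turns the return into `ℓ (1 - exp (α - x))`, whose derivative
vanishes exactly when `exp (α - x) (1 + x) = 1`, i.e. when `u = -(1 + x)` solves
`u eᵘ = -e^{-(1+α)}`. Since `u ↦ u eᵘ` is strictly decreasing on `(-∞, -1]`, the only solution
there is `u = w = W₋₁(-e^{-(1+α)})`, giving `x = -(w + 1)`. -/

open Real Set

lemma strictAntiOn_mul_exp_Iic : StrictAntiOn (fun u : ℝ => u * exp u) (Iic (-1)) := by
  refine strictAntiOn_of_deriv_neg (convex_Iic _)
    (continuous_id.mul continuous_exp).continuousOn fun u hu => ?_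
  rw [interior_Iic, mem_Iio] at hu
  have hderiv : HasDerivAt (fun u : ℝ => u * exp u) ((1 + u) * exp u) u :=
    ((hasDerivAt_id u).mul (hasDerivAt_exp u)).congr_deriv (by simp only [id]; ring)
  rw [hderiv.deriv]
  exact mul_neg_of_neg_of_pos (by linarith) (exp_pos u)

lemma exp_sub_mul_one_add_eq_one_iff {a w x : ℝ} (hw : w ≤ -1)
    (hwe : w * exp w = -exp (-(1 + a))) (hx : 0 ≤ x) :
    exp (a - x) * (1 + x) = 1 ↔ x = -(w + 1) := by
  have hscale : -(1 + x) * exp (-(1 + x)) = -exp (-(1 + a)) * (exp (a - x) * (1 + x)) := by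
    rw [show -(1 + x) = -(1 + a) + (a - x) by ring, exp_add]
    ring
  have hinj : -(1 + x) * exp (-(1 + x)) = w * exp w ↔ -(1 + x) = w :=
    strictAntiOn_mul_exp_Iic.injOn.eq_iff (by rw [mem_Iic]; linarith) hw
  rw [← mul_right_inj' (neg_ne_zero.mpr (exp_pos (-(1 + a))).ne'), ← hscale, mul_one, ← hwe,
    hinj]
  constructor <;> intro h <;> linarith

lemma hasDerivAt_mul_one_sub_exp_sub_div (a c : ℝ) {ℓ : ℝ} (hℓ : ℓ ≠ 0) :
    HasDerivAt (fun x : ℝ => x * (1 - exp (a - c / x)))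
      (1 - exp (a - c / ℓ) * (1 + c / ℓ)) ℓ := by
  have hinner : HasDerivAt (fun x : ℝ => a - c / x) (c / ℓ ^ 2) ℓ := by
    have h := ((hasDerivAt_inv hℓ).const_mul c).const_sub a
    simp only [← div_eq_mul_inv, mul_neg, neg_neg] at h
    exact h
  refine ((hasDerivAt_id ℓ).mul (((hasDerivAt_exp _).comp ℓ hinner).const_sub 1)).congr_deriv ?_
  simp only [id, Function.comp_apply]
  field_simp
  ring

lemma deriv_mul_one_sub_exp_load (α μ t s : ℝ) (hμ : μ ≠ 0) {ℓ : ℝ} (hℓ : ℓ ≠ 0) :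
    deriv (fun ℓ : ℝ => ℓ * (1 - exp (-(α * μ / ℓ) * (t - ℓ / μ - s)))) ℓ
      = 1 - exp (α - α * μ * (t - s) / ℓ) * (1 + α * μ * (t - s) / ℓ) := by
  have hnear : (fun ℓ : ℝ => ℓ * (1 - exp (-(α * μ / ℓ) * (t - ℓ / μ - s))))
      =ᶠ[nhds ℓ] fun x => x * (1 - exp (α - α * μ * (t - s) / x)) := by
    filter_upwards [eventually_ne_nhds hℓ] with x hx
    congr 3
    field_simp
    ring
  rw [hnear.deriv_eq, (hasDerivAt_mul_one_sub_exp_sub_div _ _ hℓ).deriv]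

theorem stmt_4_general (t τ α μ w : ℝ) (ν : ℕ)
    (hα : 0 < α) (hμ : 0 < μ) (hs : 0 < t - ν * τ)
    (hw : w ≤ -1) (hwe : w * Real.exp w = -Real.exp (-(1 + α))) :
    deriv (fun ℓ : ℝ => ℓ * (1 - Real.exp (-(α * μ / ℓ) * (t - ℓ / μ - τ * ν))))
        (-(α * μ * (t - ν * τ)) / (w + 1)) = 0 ∧
    ∀ ℓ : ℝ, 0 < ℓ →
      (deriv (fun ℓ : ℝ => ℓ * (1 - Real.exp (-(α * μ / ℓ) * (t - ℓ / μ - τ * ν)))) ℓ = 0 ↔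
        ℓ = -(α * μ * (t - ν * τ)) / (w + 1)) := by
  have hc : 0 < α * μ * (t - ν * τ) := by positivity
  have hw1 : w + 1 < 0 := by
    suffices w ≠ -1 by linarith [hw.lt_of_ne this]
    rintro rfl
    have : exp (-1) = exp (-(1 + α)) := by linarith
    linarith [exp_injective this]
  have hcrit : ∀ ℓ : ℝ, 0 < ℓ →
      (deriv (fun ℓ : ℝ => ℓ * (1 - exp (-(α * μ / ℓ) * (t - ℓ / μ - τ * ν)))) ℓ = 0 ↔
        ℓ = -(α * μ * (t - ν * τ)) / (w + 1)) := by
    intro ℓ hℓ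
    rw [deriv_mul_one_sub_exp_load _ _ _ _ hμ.ne' hℓ.ne', sub_eq_zero, eq_comm, mul_comm τ,
      exp_sub_mul_one_add_eq_one_iff hw hwe (by positivity), eq_div_iff hw1.ne, div_eq_iff hℓ.ne']
    constructor <;> intro h <;> linarith
  exact ⟨(hcrit _ (div_pos_of_neg_of_neg (neg_neg_of_pos hc) hw1)).2 rfl, hcrit⟩

/-- The unique critical point of f(ℓ) = ℓ(1 - exp(-(αμ/ℓ)(t - ℓ/μ - τν))) on (0, ∞) is
ℓ* = -αμ(t - ντ)/(W₋₁(-e^{-(1+α)}) + 1), where the Lambert W value `w = W₋₁(-e^{-(1+α)})`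
is characterized by w ≤ -1 and w·e^w = -e^{-(1+α)}. -/
theorem stmt_4 (t τ α μ w : ℝ) (ν : ℕ) (ht : 0 < t) (hτ : 0 < τ) (hν : 2 ≤ ν)
    (hα : 0 < α) (hμ : 0 < μ) (hs : 0 < t - ν * τ)
    (hw : w ≤ -1) (hwe : w * Real.exp w = -Real.exp (-(1 + α))) :
    deriv (fun ℓ : ℝ => ℓ * (1 - Real.exp (-(α * μ / ℓ) * (t - ℓ / μ - τ * ν))))
        (-(α * μ * (t - ν * τ)) / (w + 1)) = 0 ∧
    ∀ ℓ : ℝ, 0 < ℓ →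
      (deriv (fun ℓ : ℝ => ℓ * (1 - Real.exp (-(α * μ / ℓ) * (t - ℓ / μ - τ * ν)))) ℓ = 0 ↔
        ℓ = -(α * μ * (t - ν * τ)) / (w + 1)) :=
  stmt_4_general t τ α μ w ν hα hμ hs hw hwe
end

section
/- Let ω ~ N(0, σ⁻²I_d) and δ ~ Uniform(0, 2π] be independent. Then for any x, x' ∈ ℝ^d: E[2·cos(⟨x, ω⟩ + δ)·cos(⟨x', ω⟩ + δ)] = E[cos(⟨x - x', ω⟩)] = exp(-‖x - x'‖²/(2σ²)). -/
/-!
Conditionally on `ω`, the product-to-sum identity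
`2 cos(a + δ) cos(b + δ) = cos(a - b) + cos(a + b + 2δ)` and the vanishing of the integral of
`cos(a + b + 2δ)` over a full period of the uniform phase `δ` leave `cos⟨x - x', ω⟩`;
independence of `ω` and `δ` lets us integrate out `δ` first (Fubini on the product law).
The expectation of `cos⟨z, ω⟩` is the real part of the characteristic function of the
product Gaussian, which factors over the coordinates into `exp(-σ⁻² z_i² / 2)`.
-/

open MeasureTheory ProbabilityTheory Real NNReal

lemma integral_cos_inner_eq_re_charFun {E : Type*} [NormedAddCommGroup E] [InnerProductSpace ℝ E]
    [MeasurableSpace E] [OpensMeasurableSpace E] (μ : Measure E) [IsFiniteMeasure μ] (t : E) :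
    ∫ x, cos (inner ℝ x t) ∂μ = (charFun μ t).re := by
  have hint : Integrable (fun x ↦ Complex.exp (inner ℝ x t * Complex.I)) μ :=
    (integrable_const (1 : ℝ)).mono (by fun_prop) (by simp)
  rw [charFun_apply, ← Complex.reCLM_apply, ← Complex.reCLM.integral_comp_comm hint]
  simp [Complex.exp_ofReal_mul_I_re]

lemma integral_cos_sum_mul_pi_gaussianReal {ι : Type*} [Fintype ι] (v : ℝ≥0) (z : ι → ℝ) :
    ∫ w, cos (∑ i, z i * w i) ∂(Measure.pi fun _ : ι ↦ gaussianReal 0 v) =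
      exp (-(v * ∑ i, z i ^ 2) / 2) := by
  have h := integral_cos_inner_eq_re_charFun
    ((Measure.pi fun _ : ι ↦ gaussianReal 0 v).map (WithLp.toLp 2)) (WithLp.toLp 2 z)
  rw [charFun_pi, ← MeasurableEquiv.coe_toLp, integral_map_equiv] at h
  simp_rw [charFun_gaussianReal, ← Complex.exp_sum] at h
  convert h using 1
  · simp [PiLp.inner_apply]
  · rw [← Complex.exp_ofReal_re]
    congr 2
    push_cast
    simp [Finset.mul_sum, Finset.sum_div, neg_div]

lemma integral_cos_add_two_mul_period (c t : ℝ) : ∫ δ in t..t + 2 * π, cos (c + 2 * δ) = 0 := by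
  rw [intervalIntegral.integral_comp_add_mul (fun x ↦ cos x) two_ne_zero, integral_cos,
    show c + 2 * (t + 2 * π) = c + 2 * t + (2 : ℕ) * (2 * π) by push_cast; ring,
    (sin_periodic.nat_mul 2) _, sub_self, smul_zero]

lemma integral_two_mul_cos_mul_cos_period (a b t : ℝ) :
    ∫ δ in t..t + 2 * π, 2 * cos (a + δ) * cos (b + δ) = 2 * π * cos (a - b) := by
  have h : ∀ δ, 2 * cos (a + δ) * cos (b + δ) = cos (a - b) + cos (a + b + 2 * δ) := fun δ ↦ by
    rw [two_mul_cos_mul_cos]; ring_nf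
  simp_rw [h]
  rw [intervalIntegral.integral_add intervalIntegrable_const
    ((by fun_prop : Continuous fun δ ↦ cos (a + b + 2 * δ)).intervalIntegrable _ _),
    integral_cos_add_two_mul_period, intervalIntegral.integral_const]
  simp

lemma integral_two_mul_cos_mul_cos_uniform (a b : ℝ) :
    ∫ δ, 2 * cos (a + δ) * cos (b + δ)
      ∂((ENNReal.ofReal (2 * π))⁻¹ • volume.restrict (Set.Ioc 0 (2 * π))) = cos (a - b) := by
  have h2π : (0 : ℝ) < 2 * π := by positivity
  rw [integral_smul_measure, ← intervalIntegral.integral_of_le h2π.le,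
    ← zero_add (2 * π), integral_two_mul_cos_mul_cos_period, zero_add, ENNReal.toReal_inv,
    ENNReal.toReal_ofReal h2π.le, smul_eq_mul, inv_mul_cancel_left₀ h2π.ne']

theorem stmt_10_general {Ω : Type*} [MeasurableSpace Ω] (P : Measure Ω) [IsProbabilityMeasure P]
    (d : ℕ) (σ : ℝ≥0)
    (W : Ω → Fin d → ℝ) (Δ : Ω → ℝ) (hmW : Measurable W) (hmΔ : Measurable Δ)
    (hW : Measure.map W P = Measure.pi fun _ : Fin d => gaussianReal 0 (σ⁻¹ ^ 2))
    (hΔ : Measure.map Δ P =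
      (ENNReal.ofReal (2 * π))⁻¹ • volume.restrict (Set.Ioc 0 (2 * π)))
    (hind : IndepFun W Δ P)
    (x x' : Fin d → ℝ) :
    (∫ ω, 2 * Real.cos ((∑ i, x i * W ω i) + Δ ω) *
        Real.cos ((∑ i, x' i * W ω i) + Δ ω) ∂P =
      ∫ ω, Real.cos (∑ i, (x i - x' i) * W ω i) ∂P) ∧
    (∫ ω, Real.cos (∑ i, (x i - x' i) * W ω i) ∂P =
      Real.exp (-(∑ i, (x i - x' i) ^ 2) / (2 * (σ : ℝ) ^ 2))) := by
  set μ := Measure.pi fun _ : Fin d => gaussianReal 0 (σ⁻¹ ^ 2)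
  set ν := (ENNReal.ofReal (2 * π))⁻¹ • volume.restrict (Set.Ioc 0 (2 * π))
  have hWlaw : HasLaw W μ P := ⟨hmW.aemeasurable, hW⟩
  have hΔlaw : HasLaw Δ ν P := ⟨hmΔ.aemeasurable, hΔ⟩
  have : IsProbabilityMeasure ν := hΔlaw.isProbabilityMeasure_iff.1 ‹_›
  have hcos : ∫ ω, cos (∑ i, (x i - x' i) * W ω i) ∂P =
      ∫ w, cos (∑ i, (x i - x' i) * w i) ∂μ :=
    hWlaw.integral_comp (f := fun w ↦ cos (∑ i, (x i - x' i) * w i))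
      (by fun_prop : Continuous _).aestronglyMeasurable
  refine ⟨?_, ?_⟩
  · set G : (Fin d → ℝ) × ℝ → ℝ :=
      fun p ↦ 2 * cos ((∑ i, x i * p.1 i) + p.2) * cos ((∑ i, x' i * p.1 i) + p.2)
    have hG : Continuous G := by fun_prop
    have hGint : Integrable G (μ.prod ν) :=
      Integrable.of_bound hG.aestronglyMeasurable 2 (Filter.Eventually.of_forall fun p ↦ by
        simp only [G, norm_mul, Real.norm_eq_abs, abs_two]
        calc 2 * |cos _| * |cos _| ≤ 2 * 1 * 1 := by gcongr <;> exact abs_cos_le_one _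
          _ = 2 := by norm_num)
    calc ∫ ω, 2 * cos ((∑ i, x i * W ω i) + Δ ω) * cos ((∑ i, x' i * W ω i) + Δ ω) ∂P
        = ∫ p, G p ∂(μ.prod ν) :=
          (hind.hasLaw_prod hWlaw hΔlaw).integral_comp hG.aestronglyMeasurable
      _ = ∫ w, ∫ δ, G (w, δ) ∂ν ∂μ := integral_prod G hGint
      _ = ∫ w, cos (∑ i, (x i - x' i) * w i) ∂μ := by
          congr 1 with w
          simp only [G, ν, integral_two_mul_cos_mul_cos_uniform, ← Finset.sum_sub_distrib, sub_mul]
      _ = _ := hcos.symm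
  · rw [hcos, integral_cos_sum_mul_pi_gaussianReal]
    congr 1
    push_cast
    ring

/-- Single-feature unbiasedness of random Fourier features for the RBF kernel: for
ω ~ N(0, σ⁻²I_d) and δ ~ Uniform(0, 2π] independent,
E[2cos(⟨x,ω⟩+δ)cos(⟨x',ω⟩+δ)] = E[cos⟨x-x', ω⟩] = exp(-‖x-x'‖²/(2σ²)). -/
theorem stmt_10 {Ω : Type*} [MeasurableSpace Ω] (P : Measure Ω) [IsProbabilityMeasure P]
    (d : ℕ) (σ : ℝ≥0) (hσ : 0 < σ)
    (W : Ω → Fin d → ℝ) (Δ : Ω → ℝ) (hmW : Measurable W) (hmΔ : Measurable Δ)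
    (hW : Measure.map W P = Measure.pi fun _ : Fin d => gaussianReal 0 (σ⁻¹ ^ 2))
    (hΔ : Measure.map Δ P =
      (ENNReal.ofReal (2 * π))⁻¹ • volume.restrict (Set.Ioc 0 (2 * π)))
    (hind : IndepFun W Δ P)
    (x x' : Fin d → ℝ) :
    (∫ ω, 2 * Real.cos ((∑ i, x i * W ω i) + Δ ω) *
        Real.cos ((∑ i, x' i * W ω i) + Δ ω) ∂P =
      ∫ ω, Real.cos (∑ i, (x i - x' i) * W ω i) ∂P) ∧
    (∫ ω, Real.cos (∑ i, (x i - x' i) * W ω i) ∂P =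
      Real.exp (-(∑ i, (x i - x' i) ^ 2) / (2 * (σ : ℝ) ^ 2))) :=
  stmt_10_general P d σ W Δ hmW hmΔ hW hΔ hind x x'
end

section
/- Let ℓ*(t) = -αμ(t - ντ)/(W₋₁(-e^{-(1+α)}) + 1) for t > ντ, with α, μ, τ > 0 and integer ν ≥ 2. Then ℓ*(t) is strictly increasing and linear in t, and the exponent (αμ/ℓ*(t))(t - ℓ*(t)/μ - ντ) is a positive constant independent of t; consequently f_ν(t; ℓ*(t)) = ℓ*(t)·(1 - exp(-(αμ/ℓ*(t))(t - ℓ*(t)/μ - ντ))) is strictly increasing in t on (ντ, ∞). -/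
lemma xexp_antitone : AntitoneOn (fun x : ℝ => x * Real.exp x) (Set.Iic (-1)) := by
  apply antitoneOn_of_deriv_nonpos (convex_Iic _)
  · exact (differentiable_id.mul Real.differentiable_exp).continuous.continuousOn
  · exact fun x _ => ((differentiable_id.mul Real.differentiable_exp) x).differentiableWithinAt
  · intro x hx
    rw [interior_Iic] at hx
    have h : HasDerivAt (fun x : ℝ => x * Real.exp x) (1 * Real.exp x + x * Real.exp x) x :=
      (hasDerivAt_id x).mul (Real.hasDerivAt_exp x)
    rw [h.deriv]
    nlinarith [Real.exp_pos x, hx.out]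

/-- The optimal load ℓ*(t) = -αμ(t - ντ)/(W₋₁(-e^{-(1+α)}) + 1) is strictly increasing and
linear in t, the exponent (αμ/ℓ*(t))(t - ℓ*(t)/μ - ντ) is a positive constant independent of
t, and consequently the optimized return f_ν(t; ℓ*(t)) is strictly increasing on (ντ, ∞).
The Lambert W value `w = W₋₁(-e^{-(1+α)})` is characterized by w ≤ -1, w·e^w = -e^{-(1+α)}. -/


theorem stmt_15 (α μ τ w : ℝ) (ν : ℕ) (hα : 0 < α) (hμ : 0 < μ) (hτ : 0 < τ) (hν : 2 ≤ ν)
    (hw : w ≤ -1) (hwe : w * Real.exp w = -Real.exp (-(1 + α))) :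
    StrictMonoOn (fun t : ℝ => -(α * μ * (t - ν * τ)) / (w + 1)) (Set.Ioi ((ν : ℝ) * τ)) ∧
    (∃ a b : ℝ, 0 < a ∧ ∀ t : ℝ, -(α * μ * (t - ν * τ)) / (w + 1) = a * t + b) ∧
    (∃ C : ℝ, 0 < C ∧ ∀ t : ℝ, (ν : ℝ) * τ < t →
      (α * μ / (-(α * μ * (t - ν * τ)) / (w + 1))) *
        (t - (-(α * μ * (t - ν * τ)) / (w + 1)) / μ - ν * τ) = C) ∧
    StrictMonoOn (fun t : ℝ => (-(α * μ * (t - ν * τ)) / (w + 1)) *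
        (1 - Real.exp (-(α * μ / (-(α * μ * (t - ν * τ)) / (w + 1))) *
          (t - (-(α * μ * (t - ν * τ)) / (w + 1)) / μ - τ * ν))))
      (Set.Ioi ((ν : ℝ) * τ)) := by
  -- Key: w < -(1+α), i.e. w + 1 + α < 0
  have hC0 : w + 1 + α < 0 := by
    by_contra h
    push_neg at h
    have h1 : -(1 + α) ≤ w := by linarith
    have h2 : (-(1 + α) : ℝ) ≤ -1 := by linarith
    have := xexp_antitone (Set.mem_Iic.2 h2) (Set.mem_Iic.2 hw) h1
    simp only [hwe] at this
    have hep := Real.exp_pos (-(1 + α))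
    nlinarith
  have hw1 : w + 1 < 0 := by linarith
  have hne : w + 1 ≠ 0 := ne_of_lt hw1
  have hμne : μ ≠ 0 := ne_of_gt hμ
  -- Strict monotonicity of ℓ*
  have hsm : StrictMono (fun t : ℝ => -(α * μ * (t - ν * τ)) / (w + 1)) := by
    intro x y hxy
    simp only [div_eq_mul_inv]
    have hinv : (w + 1)⁻¹ < 0 := inv_lt_zero.2 hw1
    nlinarith [mul_pos (mul_pos hα hμ) (sub_pos.2 hxy)]
  refine ⟨hsm.strictMonoOn _, ⟨-(α * μ) / (w + 1), α * μ * ν * τ / (w + 1), ?_, ?_⟩,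
    ⟨-(w + 1 + α), by linarith, ?_⟩, ?_⟩
  · apply div_pos_of_neg_of_neg (by nlinarith) hw1
  · intro t; field_simp; ring
  · intro t ht
    have hs : (0:ℝ) < t - ν * τ := by linarith
    have hℓ : -(α * μ * (t - ν * τ)) / (w + 1) ≠ 0 := by
      apply div_ne_zero _ hne
      nlinarith [mul_pos (mul_pos hα hμ) hs]
    field_simp
    ring
  · intro x hx y hy hxy
    have key : ∀ t : ℝ, (ν : ℝ) * τ < t →
        (α * μ / (-(α * μ * (t - ν * τ)) / (w + 1))) *
        (t - (-(α * μ * (t - ν * τ)) / (w + 1)) / μ - ν * τ) = -(w + 1 + α) := by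
      intro t ht
      have hs : (0:ℝ) < t - ν * τ := by linarith
      have hℓ : -(α * μ * (t - ν * τ)) / (w + 1) ≠ 0 := by
        apply div_ne_zero _ hne
        nlinarith [mul_pos (mul_pos hα hμ) hs]
      field_simp
      ring
    have ex : ∀ t : ℝ, (ν : ℝ) * τ < t →
        -(α * μ / (-(α * μ * (t - ν * τ)) / (w + 1))) *
          (t - (-(α * μ * (t - ν * τ)) / (w + 1)) / μ - τ * ν) = -(-(w + 1 + α)) := by
      intro t ht
      have := key t ht
      rw [mul_comm τ (ν:ℝ)]
      linarith [key t ht]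
    simp only []
    rw [ex x hx, ex y hy]
    have hk : 0 < 1 - Real.exp (-(-(w + 1 + α))) := by
      have : Real.exp (-(-(w + 1 + α))) < 1 := by
        rw [Real.exp_lt_one_iff]; linarith
      linarith
    exact mul_lt_mul_of_pos_right (hsm hxy) hk
end

section
/- For fixed c > 0 and s > 0, μ > 0, the function f(ℓ) = ℓ·(1 - e^{-(c/ℓ)(s - ℓ/μ)}) on (0, μs) has derivative f'(ℓ) = 1 - (1 + cs/ℓ)·e^{-(cs/ℓ - c/μ)}, and the equation f'(ℓ) = 0 is equivalent to (1 + cs/ℓ)·e^{-(1 + cs/ℓ)} = e^{-(1 + c/μ)}, whose solution with cs/ℓ > 0 is cs/ℓ = -(W₋₁(-e^{-(1+c/μ)}) + 1), i.e., ℓ = -cs/(W₋₁(-e^{-(1+c/μ)}) + 1). -/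
open Real Set Filter

private lemma aux_anti : StrictAntiOn (fun t : ℝ => t * Real.exp (-t)) (Set.Ici 1) := by
  apply strictAntiOn_of_deriv_neg (convex_Ici 1)
  · exact (continuous_id.mul (continuous_neg.rexp)).continuousOn
  · intro t ht
    rw [interior_Ici] at ht
    have h : HasDerivAt (fun t : ℝ => t * Real.exp (-t))
        (1 * Real.exp (-t) + t * (Real.exp (-t) * (-1))) t :=
      (hasDerivAt_id t).mul ((hasDerivAt_id t).neg.exp)
    rw [h.deriv]
    have ht1 : (1 : ℝ) < t := ht
    nlinarith [Real.exp_pos (-t)]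

private lemma aux_deriv (c s μ : ℝ) (hμ : 0 < μ) {ℓ : ℝ} (hℓ : 0 < ℓ) :
    HasDerivAt (fun ℓ : ℝ => ℓ * (1 - Real.exp (-(c / ℓ) * (s - ℓ / μ)))) 
      (1 - (1 + c * s / ℓ) * Real.exp (-(c * s / ℓ - c / μ))) ℓ := by
  have hℓ0 : ℓ ≠ 0 := hℓ.ne'
  have hg : HasDerivAt (fun x : ℝ => c / μ - c * s * x⁻¹) (c * s / ℓ ^ 2) ℓ := by
    have h2 : HasDerivAt (fun x : ℝ => c / μ - c * s * x⁻¹)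
        (0 - c * s * (-(ℓ ^ 2)⁻¹)) ℓ :=
      (hasDerivAt_const ℓ (c / μ)).sub ((hasDerivAt_inv hℓ0).const_mul (c * s))
    convert h2 using 1
    field_simp
    ring
  have hf : HasDerivAt (fun x : ℝ => x * (1 - Real.exp (c / μ - c * s * x⁻¹)))
      (1 * (1 - Real.exp (c / μ - c * s * ℓ⁻¹)) +
        ℓ * (0 - Real.exp (c / μ - c * s * ℓ⁻¹) * (c * s / ℓ ^ 2))) ℓ :=
    (hasDerivAt_id ℓ).mul ((hasDerivAt_const _ _).sub hg.exp)
  have hev : (fun ℓ : ℝ => ℓ * (1 - Real.exp (-(c / ℓ) * (s - ℓ / μ)))) =ᶠ[nhds ℓ]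
      (fun x : ℝ => x * (1 - Real.exp (c / μ - c * s * x⁻¹))) := by
    filter_upwards [eventually_gt_nhds hℓ] with x hx
    have hx0 : x ≠ 0 := hx.ne'
    congr 2
    field_simp
    ring
  have := hf.congr_of_eventuallyEq hev
  refine this.congr_deriv ?_
  have he : -(c * s / ℓ - c / μ) = c / μ - c * s * ℓ⁻¹ := by field_simp; ring
  rw [he]
  field_simp
  ring

/-- Derivative formula f'(ℓ) = 1 - (1 + cs/ℓ)e^{-(cs/ℓ - c/μ)} for
f(ℓ) = ℓ(1 - e^{-(c/ℓ)(s - ℓ/μ)}), the equivalence of f'(ℓ) = 0 with the Lambert-type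
equation (1 + cs/ℓ)e^{-(1 + cs/ℓ)} = e^{-(1 + c/μ)}, and its solution
ℓ = -cs/(W₋₁(-e^{-(1+c/μ)}) + 1), where the Lambert W value `w = W₋₁(-e^{-(1+c/μ)})` is
characterized by w ≤ -1 and w·e^w = -e^{-(1+c/μ)}. -/
theorem stmt_19 (c s μ w : ℝ) (hc : 0 < c) (hs : 0 < s) (hμ : 0 < μ)
    (hw : w ≤ -1) (hwe : w * Real.exp w = -Real.exp (-(1 + c / μ))) :
    (∀ ℓ ∈ Set.Ioo (0 : ℝ) (μ * s),
      deriv (fun ℓ : ℝ => ℓ * (1 - Real.exp (-(c / ℓ) * (s - ℓ / μ)))) ℓ =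
        1 - (1 + c * s / ℓ) * Real.exp (-(c * s / ℓ - c / μ))) ∧
    (∀ ℓ ∈ Set.Ioo (0 : ℝ) (μ * s),
      (deriv (fun ℓ : ℝ => ℓ * (1 - Real.exp (-(c / ℓ) * (s - ℓ / μ)))) ℓ = 0 ↔
        (1 + c * s / ℓ) * Real.exp (-(1 + c * s / ℓ)) = Real.exp (-(1 + c / μ)))) ∧
    (∀ ℓ ∈ Set.Ioo (0 : ℝ) (μ * s),
      ((1 + c * s / ℓ) * Real.exp (-(1 + c * s / ℓ)) = Real.exp (-(1 + c / μ)) ↔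
        ℓ = -(c * s) / (w + 1))) := by
  have hcμ : 0 < c / μ := div_pos hc hμ
  -- w < -1
  have hw1 : w < -1 := by
    rcases lt_or_eq_of_le hw with h | h
    · exact h
    · exfalso
      rw [h] at hwe
      have : Real.exp (-1) = Real.exp (-(1 + c / μ)) := by linarith [hwe]
      have := Real.exp_injective this
      linarith
  refine ⟨?_, ?_, ?_⟩
  · intro ℓ hℓ
    exact (aux_deriv c s μ hμ hℓ.1).deriv
  · intro ℓ hℓ
    rw [(aux_deriv c s μ hμ hℓ.1).deriv]
    have hE : Real.exp (-(1 + c * s / ℓ)) =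
        Real.exp (-(c * s / ℓ - c / μ)) * Real.exp (-(1 + c / μ)) := by
      rw [← Real.exp_add]; ring_nf
    constructor
    · intro h
      rw [hE]
      have : (1 + c * s / ℓ) * Real.exp (-(c * s / ℓ - c / μ)) = 1 := by linarith
      rw [← mul_assoc, this, one_mul]
    · intro h
      rw [hE, ← mul_assoc] at h
      have hp := (Real.exp_pos (-(1 + c / μ))).ne'
      have : (1 + c * s / ℓ) * Real.exp (-(c * s / ℓ - c / μ)) = 1 :=
        mul_right_cancel₀ hp (by rw [h, one_mul])
      linarith
  · intro ℓ hℓ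
    obtain ⟨hℓ0, hℓμ⟩ := hℓ
    have hℓne : ℓ ≠ 0 := hℓ0.ne'
    have hx : 0 < c * s / ℓ := div_pos (mul_pos hc hs) hℓ0
    have hw10 : w + 1 < 0 := by linarith
    have hrhs : Real.exp (-(1 + c / μ)) = (-w) * Real.exp (-(-w)) := by
      rw [neg_neg]
      linarith [hwe]
    constructor
    · intro h
      rw [hrhs] at h
      have h1 : (1 : ℝ) + c * s / ℓ ∈ Set.Ici (1 : ℝ) := by
        simp; linarith
      have h2 : -w ∈ Set.Ici (1 : ℝ) := by simp; linarith
      have heq : 1 + c * s / ℓ = -w := aux_anti.injOn h1 h2 h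
      have hthis : c * s / ℓ = -(w + 1) := by linarith
      rw [eq_div_iff hw10.ne]
      field_simp at hthis
      linear_combination hthis
    · intro h
      have hcs : c * s / ℓ = -(w + 1) := by
        rw [h]
        field_simp
      rw [hcs, hrhs]
      ring_nf
end
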